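/- Let V be a finite-dimensional Γ-graded vector space of dimension at least 2 with a non-degenerate ε-symmetric bilinear form ( , ). For u,v ∈ V define f(u,v) ∈ End(V) by f(u,v)(w) := ε(v,w)(u,w)v − (v,w)u. Then f(u,v) lies in so_ε(V,( , )) and Tr_ε(f ∘ f(u,v)) = −2(f(u),v) for every f ∈ so_ε(V,( , )). -/

import Mathlib

/-!
Since `( , )` pairs `V_a` only with `V_{-a}`, on homogeneous `w` the formula for `f(u,v)` agrees
with `w ↦ ε(a,b)(u,w)v − (v,w)u`, a difference of two rank-one maps. Both claims then reduce to
computations with rank-one maps: ε-skewness is checked on homogeneous `w, w'`, and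
`Tr(𝓔 ∘ f ∘ (φ ⊗ y)) = φ(𝓔 f y)`, so `Tr_ε(f ∘ f(u,v)) = ε(a,b)(u, 𝓔 f v) − (v, 𝓔 f u)`. For
homogeneous `f` of degree `γ` both terms vanish unless `a + b + γ = 0`, and then ε-skewness and
ε-symmetry turn each into `−(f(u),v)`; the general `f ∈ so_ε` follows by linearity.
-/

/-- A commutation factor of an abelian group `Γ` with values in `k`. -/
structure CommutationFactor (k Γ : Type*) [Field k] [AddCommGroup Γ] where
  ε : Γ → Γ → k
  mul_symm : ∀ a b, ε a b * ε b a = 1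
  add_fst : ∀ a b c, ε (a + b) c = ε a c * ε b c
  add_snd : ∀ a b c, ε a (b + c) = ε a b * ε a c

/-- The submodule of endomorphisms of a `Γ`-graded vector space which are
homogeneous of degree `γ`. -/
def homDeg {k Γ V : Type*} [Field k] [AddCommGroup Γ]
    [AddCommGroup V] [Module k V]
    (𝒱 : Γ → Submodule k V) (γ : Γ) : Submodule k (Module.End k V) where
  carrier := {f | ∀ a : Γ, ∀ v ∈ 𝒱 a, f v ∈ 𝒱 (a + γ)}
  add_mem' := by
    intro f g hf hg a v hv
    simpa [LinearMap.add_apply] using Submodule.add_mem _ (hf a v hv) (hg a v hv)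
  zero_mem' := by
    intro a v hv
    simp
  smul_mem' := by
    intro c f hf a v hv
    simpa [LinearMap.smul_apply] using Submodule.smul_mem _ c (hf a v hv)

/-- The submodule of endomorphisms of degree `γ` which are ε-skew with respect
to a bilinear form `Bv`. -/
def skewDeg {k Γ V : Type*} [Field k] [AddCommGroup Γ]
    [AddCommGroup V] [Module k V]
    (ε : Γ → Γ → k) (Bv : V →ₗ[k] V →ₗ[k] k)
    (𝒱 : Γ → Submodule k V) (γ : Γ) : Submodule k (Module.End k V) where
  carrier := {f | ∀ a b : Γ, ∀ v ∈ 𝒱 a, ∀ w ∈ 𝒱 b,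
    Bv (f v) w + ε γ a * Bv v (f w) = 0}
  add_mem' := by
    intro f g hf hg a b v hv w hw
    have h1 := hf a b v hv w hw
    have h2 := hg a b v hv w hw
    simp only [LinearMap.add_apply, map_add]
    linear_combination h1 + h2
  zero_mem' := by
    intro a b v hv w hw
    simp
  smul_mem' := by
    intro c f hf a b v hv w hw
    have h1 := hf a b v hv w hw
    simp only [LinearMap.smul_apply, map_smul, smul_eq_mul]
    linear_combination c * h1

/-- The colour Lie algebra `so_ε(V, Bv)` as a submodule of `End(V)`: the span
of its homogeneous components. -/
def soSub {k Γ V : Type*} [Field k] [AddCommGroup Γ]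
    [AddCommGroup V] [Module k V]
    (ε : Γ → Γ → k) (Bv : V →ₗ[k] V →ₗ[k] k)
    (𝒱 : Γ → Submodule k V) : Submodule k (Module.End k V) :=
  ⨆ γ : Γ, (homDeg 𝒱 γ ⊓ skewDeg ε Bv 𝒱 γ)

namespace CommutationFactor

variable {k Γ : Type*} [Field k] [AddCommGroup Γ] (E : CommutationFactor k Γ)

lemma ne_zero (a b : Γ) : E.ε a b ≠ 0 :=
  left_ne_zero_of_mul_eq_one (E.mul_symm a b)

lemma zero_fst (b : Γ) : E.ε 0 b = 1 := by
  have h := E.add_fst 0 0 b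
  rw [add_zero] at h
  exact (mul_eq_left₀ (E.ne_zero 0 b)).mp h.symm

lemma zero_snd (a : Γ) : E.ε a 0 = 1 := by
  have h := E.add_snd a 0 0
  rw [add_zero] at h
  exact (mul_eq_left₀ (E.ne_zero a 0)).mp h.symm

lemma neg_fst (a b : Γ) : E.ε (-a) b = E.ε b a := by
  refine mul_right_cancel₀ (E.ne_zero a b) ?_
  rw [← E.add_fst, neg_add_cancel, E.zero_fst, E.mul_symm]

lemma neg_snd (a b : Γ) : E.ε a (-b) = E.ε b a := by
  refine mul_right_cancel₀ (E.ne_zero a b) ?_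
  rw [← E.add_snd, neg_add_cancel, E.zero_snd, mul_comm, E.mul_symm]

end CommutationFactor

section GradedForm

variable {k Γ V : Type*} [Field k] [AddCommGroup Γ] [AddCommGroup V] [Module k V]
  {𝒱 : Γ → Submodule k V} {Bv : V →ₗ[k] V →ₗ[k] k}

def IsDegreeZeroForm (𝒱 : Γ → Submodule k V) (Bv : V →ₗ[k] V →ₗ[k] k) : Prop :=
  ∀ a b : Γ, a + b ≠ 0 → ∀ v ∈ 𝒱 a, ∀ w ∈ 𝒱 b, Bv v w = 0

namespace IsDegreeZeroForm

variable {a b : Γ} {x y : V}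

lemma eq_zero_or_eq_neg (hB : IsDegreeZeroForm 𝒱 Bv) (hx : x ∈ 𝒱 a) (hy : y ∈ 𝒱 b) :
    Bv x y = 0 ∨ b = -a := by
  by_cases hab : a + b = 0
  · exact Or.inr (eq_neg_of_add_eq_zero_right hab)
  · exact Or.inl (hB a b hab x hx y hy)

lemma eps_snd_mul (hB : IsDegreeZeroForm 𝒱 Bv) (E : CommutationFactor k Γ)
    (hx : x ∈ 𝒱 a) (hy : y ∈ 𝒱 b) (c : Γ) : E.ε c b * Bv x y = E.ε a c * Bv x y := by
  obtain h | rfl := hB.eq_zero_or_eq_neg hx hy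
  · simp [h]
  · rw [E.neg_snd]

lemma eps_fst_mul (hB : IsDegreeZeroForm 𝒱 Bv) (E : CommutationFactor k Γ)
    (hx : x ∈ 𝒱 a) (hy : y ∈ 𝒱 b) (c : Γ) : E.ε b c * Bv x y = E.ε c a * Bv x y := by
  obtain h | rfl := hB.eq_zero_or_eq_neg hx hy
  · simp [h]
  · rw [E.neg_fst]

lemma smul_mem (hB : IsDegreeZeroForm 𝒱 Bv) (hx : x ∈ 𝒱 a) (hy : y ∈ 𝒱 b)
    {c : Γ} {z : V} (hz : z ∈ 𝒱 c) : Bv x y • z ∈ 𝒱 (b + a + c) := by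
  obtain h | rfl := hB.eq_zero_or_eq_neg hx hy
  · simp [h]
  · simpa using Submodule.smul_mem _ _ hz

lemma apply_calE (hB : IsDegreeZeroForm 𝒱 Bv) {E : CommutationFactor k Γ}
    {calE : Module.End k V} (hcalE : ∀ γ : Γ, ∀ v ∈ 𝒱 γ, calE v = E.ε γ γ • v)
    (hx : x ∈ 𝒱 a) (hy : y ∈ 𝒱 b) : Bv x (calE y) = E.ε a a * Bv x y := by
  rw [hcalE b y hy, map_smul, smul_eq_mul, hB.eps_fst_mul E hx hy, hB.eps_fst_mul E hx hy]

end IsDegreeZeroForm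

/-- The endomorphism `f(u,v)` for `u ∈ V_a`, `v ∈ V_b`: on `w ∈ V_c` with `(u,w) ≠ 0` one has
`c = -a`, so the factor `ε(a,b)` is the paper's `ε(v,w)`. -/
def pairEnd (E : CommutationFactor k Γ) (Bv : V →ₗ[k] V →ₗ[k] k) (a b : Γ) (u v : V) :
    Module.End k V :=
  E.ε a b • (Bv u).smulRight v - (Bv v).smulRight u

variable {E : CommutationFactor k Γ} {a b : Γ} {u v : V}

lemma pairEnd_apply (w : V) :
    pairEnd E Bv a b u v w = (E.ε a b * Bv u w) • v - Bv v w • u := by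
  simp [pairEnd, mul_smul]

lemma pairEnd_apply_of_mem (hB : IsDegreeZeroForm 𝒱 Bv) (hu : u ∈ 𝒱 a) {c : Γ} {w : V}
    (hw : w ∈ 𝒱 c) : pairEnd E Bv a b u v w = (E.ε b c * Bv u w) • v - Bv v w • u := by
  rw [pairEnd_apply, hB.eps_snd_mul E hu hw]

lemma eq_pairEnd [DecidableEq Γ] [DirectSum.Decomposition 𝒱] (hB : IsDegreeZeroForm 𝒱 Bv)
    (hu : u ∈ 𝒱 a) {F : Module.End k V}
    (hF : ∀ c : Γ, ∀ w ∈ 𝒱 c, F w = (E.ε b c * Bv u w) • v - Bv v w • u) :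
    F = pairEnd E Bv a b u v :=
  DirectSum.decompose_lhom_ext 𝒱 fun c ↦ LinearMap.ext fun ⟨w, hw⟩ ↦ by
    simp [hF c w hw, pairEnd_apply_of_mem hB hu hw]

lemma pairEnd_mem_homDeg (hB : IsDegreeZeroForm 𝒱 Bv) (hu : u ∈ 𝒱 a) (hv : v ∈ 𝒱 b) :
    pairEnd E Bv a b u v ∈ homDeg 𝒱 (a + b) := by
  intro c w hw
  rw [pairEnd_apply, mul_smul]
  refine Submodule.sub_mem _ (Submodule.smul_mem _ _ ?_) ?_
  · simpa [add_assoc] using hB.smul_mem hu hw hv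
  · simpa [add_assoc, add_comm b] using hB.smul_mem hv hw hu

lemma pairEnd_mem_skewDeg (hB : IsDegreeZeroForm 𝒱 Bv)
    (hBsymm : ∀ a b : Γ, ∀ v ∈ 𝒱 a, ∀ w ∈ 𝒱 b, Bv v w = E.ε a b * Bv w v)
    (hu : u ∈ 𝒱 a) (hv : v ∈ 𝒱 b) :
    pairEnd E Bv a b u v ∈ skewDeg E.ε Bv 𝒱 (a + b) := by
  intro c d w hw w' hw'
  rw [pairEnd_apply_of_mem hB hu hw, pairEnd_apply_of_mem hB hu hw']
  simp only [map_sub, map_smul, LinearMap.sub_apply, LinearMap.smul_apply, smul_eq_mul,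
    E.add_fst, hBsymm c b w hw v hv, hBsymm c a w hw u hu]
  -- `(v,w)(u,w') ≠ 0` forces `c = -b` and `d = -a`
  have hcd : E.ε a c * E.ε b d * (Bv v w * Bv u w') = Bv v w * Bv u w' := by
    calc E.ε a c * E.ε b d * (Bv v w * Bv u w')
        = (E.ε a c * Bv v w) * (E.ε b d * Bv u w') := by ring
      _ = (E.ε b a * Bv v w) * (E.ε a b * Bv u w') := by
          rw [hB.eps_snd_mul E hv hw, hB.eps_snd_mul E hu hw']
      _ = Bv v w * Bv u w' := by linear_combination (Bv v w * Bv u w') * E.mul_symm b a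
  linear_combination (-(Bv u w * Bv v w') * E.ε b c) * E.mul_symm a c + hcd +
    (Bv v w * Bv u w' * E.ε a c * E.ε b d) * E.mul_symm b c

lemma trace_mul_mul_pairEnd [FiniteDimensional k V] (g f : Module.End k V) :
    LinearMap.trace k V (g * (f * pairEnd E Bv a b u v)) =
      E.ε a b * Bv u (g (f v)) - Bv v (g (f u)) := by
  have h : g * (f * pairEnd E Bv a b u v) =
      E.ε a b • (Bv u).smulRight (g (f v)) - (Bv v).smulRight (g (f u)) := by
    ext w
    simp [pairEnd_apply, mul_smul]
  simp [h]

lemma trace_calE_mul_pairEnd_of_mem [FiniteDimensional k V] (hB : IsDegreeZeroForm 𝒱 Bv)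
    (hBsymm : ∀ a b : Γ, ∀ v ∈ 𝒱 a, ∀ w ∈ 𝒱 b, Bv v w = E.ε a b * Bv w v)
    {calE : Module.End k V} (hcalE : ∀ γ : Γ, ∀ v ∈ 𝒱 γ, calE v = E.ε γ γ • v)
    (hu : u ∈ 𝒱 a) (hv : v ∈ 𝒱 b) {γ : Γ} {f : Module.End k V}
    (hf : f ∈ homDeg 𝒱 γ ⊓ skewDeg E.ε Bv 𝒱 γ) :
    LinearMap.trace k V (calE * (f * pairEnd E Bv a b u v)) = -2 * Bv (f u) v := by
  obtain ⟨hfdeg, hfskew⟩ := hf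
  have hfu := hfdeg a u hu
  have hskew := hfskew a b u hu v hv
  rw [trace_mul_mul_pairEnd, hB.apply_calE hcalE hu (hfdeg b v hv), hB.apply_calE hcalE hv hfu,
    hBsymm b _ v hv _ hfu]
  obtain h | rfl := hB.eq_zero_or_eq_neg hfu hv
  · have h' : Bv u (f v) = 0 := by
      simpa [h, E.ne_zero] using hskew
    simp [h, h']
  · -- with `b = -(a + γ)` every ε-factor is a product of terms `ε(x,y)ε(y,x) = 1`
    simp only [E.neg_fst, E.neg_snd, E.add_fst, E.add_snd] at hskew ⊢
    linear_combination hskew + (E.ε γ a * Bv u (f v) -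
        Bv (f u) v * (E.ε a γ * E.ε γ a) ^ 2 * E.ε γ γ ^ 2) * E.mul_symm a a -
      Bv (f u) v * (E.ε a γ * E.ε γ a + 1) * E.ε γ γ ^ 2 * E.mul_symm a γ -
      Bv (f u) v * E.mul_symm γ γ

lemma trace_calE_mul_pairEnd [FiniteDimensional k V] (hB : IsDegreeZeroForm 𝒱 Bv)
    (hBsymm : ∀ a b : Γ, ∀ v ∈ 𝒱 a, ∀ w ∈ 𝒱 b, Bv v w = E.ε a b * Bv w v)
    {calE : Module.End k V} (hcalE : ∀ γ : Γ, ∀ v ∈ 𝒱 γ, calE v = E.ε γ γ • v)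
    (hu : u ∈ 𝒱 a) (hv : v ∈ 𝒱 b) {f : Module.End k V} (hf : f ∈ soSub E.ε Bv 𝒱) :
    LinearMap.trace k V (calE * (f * pairEnd E Bv a b u v)) = -2 * Bv (f u) v := by
  induction hf using Submodule.iSup_induction' with
  | mem γ f hf => exact trace_calE_mul_pairEnd_of_mem hB hBsymm hcalE hu hv hf
  | zero => simp
  | add f g _ _ hf hg => simp [add_mul, mul_add, hf, hg]

end GradedForm

theorem stmt8_general {k Γ V : Type*} [Field k] [AddCommGroup Γ] [DecidableEq Γ]
    [AddCommGroup V] [Module k V] [FiniteDimensional k V]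
    (E : CommutationFactor k Γ)
    (𝒱 : Γ → Submodule k V) [DirectSum.Decomposition 𝒱]
    (Bv : V →ₗ[k] V →ₗ[k] k)
    (hBvdeg : ∀ a b : Γ, a + b ≠ 0 → ∀ v ∈ 𝒱 a, ∀ w ∈ 𝒱 b, Bv v w = 0)
    (hBvsymm : ∀ a b : Γ, ∀ v ∈ 𝒱 a, ∀ w ∈ 𝒱 b, Bv v w = E.ε a b * Bv w v)
    (calE : Module.End k V)
    (hcalE : ∀ γ : Γ, ∀ v ∈ 𝒱 γ, calE v = E.ε γ γ • v)
    (a b : Γ) (u : V) (hu : u ∈ 𝒱 a) (v : V) (hv : v ∈ 𝒱 b)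
    (F : Module.End k V)
    (hF : ∀ c : Γ, ∀ w ∈ 𝒱 c, F w = (E.ε b c * Bv u w) • v - Bv v w • u) :
    F ∈ homDeg 𝒱 (a + b) ⊓ skewDeg E.ε Bv 𝒱 (a + b) ∧
    (∀ f ∈ soSub E.ε Bv 𝒱,
      LinearMap.trace k V (calE * (f * F)) = -2 * Bv (f u) v) := by
  obtain rfl := eq_pairEnd hBvdeg hu hF
  exact ⟨⟨pairEnd_mem_homDeg hBvdeg hu hv, pairEnd_mem_skewDeg hBvdeg hBvsymm hu hv⟩,
    fun f hf ↦ trace_calE_mul_pairEnd hBvdeg hBvsymm hcalE hu hv hf⟩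

/-- For `u ∈ V_a`, `v ∈ V_b`, the endomorphism `F = f(u,v)` given on
homogeneous `w` by `F(w) = ε(v,w)(u,w)v − (v,w)u` lies in
`so_ε(V)` (it is homogeneous of degree `a+b` and ε-skew), and
`Tr_ε(f ∘ F) = −2(f(u),v)` for every `f ∈ so_ε(V)`. -/
theorem stmt8 {k Γ V : Type*} [Field k] [AddCommGroup Γ] [DecidableEq Γ]
    [AddCommGroup V] [Module k V] [FiniteDimensional k V]
    (h2 : (2 : k) ≠ 0) (hdim : 2 ≤ Module.finrank k V)
    (E : CommutationFactor k Γ)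
    (𝒱 : Γ → Submodule k V) [DirectSum.Decomposition 𝒱]
    (Bv : V →ₗ[k] V →ₗ[k] k)
    (hBvdeg : ∀ a b : Γ, a + b ≠ 0 → ∀ v ∈ 𝒱 a, ∀ w ∈ 𝒱 b, Bv v w = 0)
    (hBvsymm : ∀ a b : Γ, ∀ v ∈ 𝒱 a, ∀ w ∈ 𝒱 b, Bv v w = E.ε a b * Bv w v)
    (hBvnd : ∀ v : V, (∀ w, Bv v w = 0) → v = 0)
    (calE : Module.End k V)
    (hcalE : ∀ γ : Γ, ∀ v ∈ 𝒱 γ, calE v = E.ε γ γ • v)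
    (a b : Γ) (u : V) (hu : u ∈ 𝒱 a) (v : V) (hv : v ∈ 𝒱 b)
    (F : Module.End k V)
    (hF : ∀ c : Γ, ∀ w ∈ 𝒱 c, F w = (E.ε b c * Bv u w) • v - Bv v w • u) :
    F ∈ homDeg 𝒱 (a + b) ⊓ skewDeg E.ε Bv 𝒱 (a + b) ∧
    (∀ f ∈ soSub E.ε Bv 𝒱,
      LinearMap.trace k V (calE * (f * F)) = -2 * Bv (f u) v) :=
  stmt8_general E 𝒱 Bv hBvdeg hBvsymm calE hcalE a b u hu v hv F hF
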